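/- For multi-indices $\alpha, \beta \in \mathbb{N}^n$ with $|\alpha|, |\beta| \le m$, one has $\frac{(n+m)!}{\pi^n m!}\int_{\mathbb{C}^n} z^\alpha \overline{z}^\beta (1+|z|^2)^{-(n+m+1)}\,dV(z) = \delta_{\alpha\beta} \frac{\alpha!(m-|\alpha|)!}{m!}$, where $|z|^2 = |z_1|^2+\cdots+|z_n|^2$. -/

import Mathlib

open MeasureTheory Real

open Set


lemma integrable_base {c : ℝ} (hc : 0 < c) :
    IntegrableOn (fun t : ℝ => ((c + t) ^ 2)⁻¹) (Ioi 0) := by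
  have := integrableOn_Ioi_deriv_of_nonneg (g := fun t : ℝ => -(c + t)⁻¹)
    (g' := fun t : ℝ => ((c + t) ^ 2)⁻¹) (a := 0) (l := 0) ?_ ?_ ?_ ?_
  · exact this
  · exact (((continuous_const.add continuous_id).continuousWithinAt).inv₀
      (by simpa using hc.ne')).neg
  · intro x hx
    have hx0 : (0:ℝ) < x := hx
    have h : c + x ≠ 0 := by positivity
    have := ((hasDerivAt_id x).const_add c).inv h
    refine this.neg.congr_deriv ?_
    simp only [id]
    field_simp
  · intro x hx; positivity
  · have : Filter.Tendsto (fun t : ℝ => c + t) Filter.atTop Filter.atTop :=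
      Filter.tendsto_atTop_add_const_left _ _ Filter.tendsto_id
    simpa using (this.inv_tendsto_atTop).neg

lemma contOn {c : ℝ} (hc : 0 < c) (a k : ℕ) :
    ContinuousOn (fun t : ℝ => t ^ a * ((c + t) ^ k)⁻¹) (Ioi 0) := by
  refine ContinuousOn.mul (by fun_prop) (ContinuousOn.inv₀ (by fun_prop) ?_)
  intro x hx
  have : (0:ℝ) < x := hx
  positivity

lemma integrable_F {c : ℝ} (hc : 0 < c) (a k : ℕ) (h : a + 2 ≤ k) :
    IntegrableOn (fun t : ℝ => t ^ a * ((c + t) ^ k)⁻¹) (Ioi 0) := by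
  refine Integrable.mono' ((integrable_base hc).const_mul ((c ^ (k - a - 2))⁻¹)) ?_ ?_
  · exact (contOn hc a k).aestronglyMeasurable measurableSet_Ioi
  · filter_upwards [ae_restrict_mem measurableSet_Ioi] with t ht
    have ht0 : (0:ℝ) < t := ht
    have hct : (0:ℝ) < c + t := by positivity
    rw [Real.norm_eq_abs, abs_of_nonneg (by positivity)]
    have key : t ^ a * (c ^ (k - a - 2) * (c + t) ^ 2) ≤ (c + t) ^ k * 1 := by
      rw [mul_one]
      calc t ^ a * (c ^ (k - a - 2) * (c + t) ^ 2)
          ≤ (c + t) ^ a * ((c + t) ^ (k - a - 2) * (c + t) ^ 2) := by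
            gcongr <;> linarith
        _ = (c + t) ^ k := by rw [← pow_add, ← pow_add]; congr 1; omega
    calc t ^ a * ((c + t) ^ k)⁻¹ = t ^ a / (c + t) ^ k := by ring
      _ ≤ 1 / (c ^ (k - a - 2) * (c + t) ^ 2) := by
          rw [div_le_div_iff₀ (by positivity) (by positivity)]; linarith
      _ = (c ^ (k - a - 2))⁻¹ * ((c + t) ^ 2)⁻¹ := by rw [one_div, mul_inv]

lemma fact_id (a j : ℕ) :
    ((a.factorial : ℝ) * j.factorial / (a+j+1).factorial)
      - (a.factorial * (j+1).factorial / (a+j+2).factorial)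
      = ((a+1).factorial * j.factorial / (a+j+2).factorial) := by
  have h1 : ((a+j+2).factorial : ℝ) = (a+j+2) * (a+j+1).factorial := by
    rw [show a+j+2 = (a+j+1)+1 by ring, Nat.factorial_succ]; push_cast; ring
  have h2 : ((j+1).factorial : ℝ) = (j+1) * j.factorial := by
    rw [Nat.factorial_succ]; push_cast; ring
  have h3 : ((a+1).factorial : ℝ) = (a+1) * a.factorial := by
    rw [Nat.factorial_succ]; push_cast; ring
  have p1 : ((a+j+1).factorial : ℝ) ≠ 0 := Nat.cast_ne_zero.2 (Nat.factorial_ne_zero _)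
  rw [h1, h2, h3]
  field_simp
  ring

lemma F_base {c : ℝ} (hc : 0 < c) (J : ℕ) :
    ∫ t in Ioi (0:ℝ), ((c + t) ^ (J + 2))⁻¹ = ((J:ℝ) + 1)⁻¹ * (c ^ (J + 1))⁻¹ := by
  have key := integral_Ioi_of_hasDerivAt_of_tendsto
    (f := fun t : ℝ => -(((J:ℝ) + 1)⁻¹ * ((c + t) ^ (J + 1))⁻¹))
    (f' := fun t : ℝ => ((c + t) ^ (J + 2))⁻¹) (a := 0) (m := 0) ?_ ?_ ?_ ?_
  · rw [key]; simp
  · refine ContinuousAt.continuousWithinAt ?_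
    have h1 : ContinuousAt (fun t : ℝ => ((c+t)^(J+1))⁻¹) 0 :=
      (((continuous_const.add continuous_id).pow _).continuousAt).inv₀ (by simpa using by positivity)
    exact (h1.const_mul _).neg
  · intro x hx
    have hx0 : (0:ℝ) < x := hx
    have h : c + x ≠ 0 := by positivity
    have hd : HasDerivAt (fun t : ℝ => (c+t)^(J+1)) ((J+1) * (c+x)^J) x := by
      have := ((hasDerivAt_id x).const_add c).pow (J+1)
      simp at this
      exact this
    have := (hd.inv (by positivity)).const_mul (((J:ℝ) + 1)⁻¹)
    refine this.neg.congr_deriv ?_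
    have hJ : ((J:ℝ) + 1) ≠ 0 := by positivity
    field_simp
    ring
  · have := integrable_F hc 0 (J+2) (by omega)
    simpa using this
  · have h1 : Filter.Tendsto (fun t : ℝ => c + t) Filter.atTop Filter.atTop :=
      Filter.tendsto_atTop_add_const_left _ _ Filter.tendsto_id
    have h2 : Filter.Tendsto (fun t : ℝ => (c + t)^(J+1)) Filter.atTop Filter.atTop :=
      (Filter.tendsto_pow_atTop (by omega : J+1 ≠ 0)).comp h1
    simpa using ((h2.inv_tendsto_atTop).const_mul (((J:ℝ)+1)⁻¹)).neg

lemma F_eval {c : ℝ} (hc : 0 < c) : ∀ a k : ℕ, a + 2 ≤ k →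
    ∫ t in Ioi (0:ℝ), t ^ a * ((c + t) ^ k)⁻¹
      = (a.factorial * (k - a - 2).factorial / (k - 1).factorial) * (c ^ (k - a - 1))⁻¹ := by
  intro a
  induction a with
  | zero =>
    intro k hk
    obtain ⟨J, rfl⟩ : ∃ J, k = J + 2 := ⟨k - 2, by omega⟩
    have := F_base hc J
    simp only [pow_zero, one_mul]
    rw [this]
    have e1 : J + 2 - 0 - 2 = J := by omega
    have e2 : J + 2 - 1 = J + 1 := by omega
    have e3 : J + 2 - 0 - 1 = J + 1 := by omega
    rw [e1, e2, e3, Nat.factorial_succ, Nat.factorial_zero]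
    have : ((J+1).factorial : ℝ) ≠ 0 := Nat.cast_ne_zero.2 (Nat.factorial_ne_zero _)
    push_cast
    field_simp
  | succ a ih =>
    intro k hk
    obtain ⟨j, rfl⟩ : ∃ j, k = a + 3 + j := ⟨k - (a+3), by omega⟩
    set k := a + 3 + j with hkdef
    have h1 : a + 2 ≤ k - 1 := by omega
    have h2 : a + 2 ≤ k := by omega
    have split : ∀ t ∈ Ioi (0:ℝ),
        t ^ (a+1) * ((c + t) ^ k)⁻¹
          = t ^ a * ((c + t) ^ (k-1))⁻¹ - c * (t ^ a * ((c + t) ^ k)⁻¹) := by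
      intro t ht
      have ht0 : (0:ℝ) < t := ht
      have hct : (0:ℝ) < c + t := by positivity
      have hpow : (c+t)^k = (c+t)^(k-1) * (c+t) := by
        rw [← pow_succ]; congr 1; omega
      field_simp
      rw [hpow]
      ring
    rw [setIntegral_congr_fun measurableSet_Ioi split, integral_sub (integrable_F hc a (k-1) h1)
      (((integrable_F hc a k h2)).const_mul c), integral_const_mul, ih (k-1) h1, ih k h2]
    have e1 : k - 1 - a - 2 = j := by omega
    have e2 : k - 1 - 1 = a + j + 1 := by omega
    have e3 : k - 1 - a - 1 = j + 1 := by omega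
    have e4 : k - a - 2 = j + 1 := by omega
    have e5 : k - 1 = a + j + 2 := by omega
    have e6 : k - a - 1 = j + 2 := by omega
    have e7 : k - (a+1) - 2 = j := by omega
    have e8 : k - (a+1) - 1 = j + 1 := by omega
    rw [e1, e2, e3, e4, e5, e6, e7, e8]
    have hfid := fact_id a j
    have hc1 : (c ^ (j+1)) ≠ 0 := by positivity
    have hc2 : c * (c ^ (j+2))⁻¹ = (c ^ (j+1))⁻¹ := by
      rw [pow_succ']
      field_simp
    calc (a.factorial * j.factorial / (a+j+1).factorial : ℝ) * (c ^ (j+1))⁻¹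
          - c * ((a.factorial * (j+1).factorial / (a+j+2).factorial) * (c ^ (j+2))⁻¹)
        = ((a.factorial * j.factorial / (a+j+1).factorial : ℝ)
            - (a.factorial * (j+1).factorial / (a+j+2).factorial)) * (c ^ (j+1))⁻¹ := by
          rw [sub_mul]
          congr 1
          rw [show c * ((a.factorial * (j+1).factorial / (a+j+2).factorial : ℝ) * (c ^ (j+2))⁻¹)
            = (a.factorial * (j+1).factorial / (a+j+2).factorial : ℝ) * (c * (c ^ (j+2))⁻¹) from by ring, hc2]
      _ = ((a+1).factorial * j.factorial / (a+j+2).factorial : ℝ) * (c ^ (j+1))⁻¹ := by rw [hfid]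

lemma theta_int (a b : ℕ) :
    ∫ θ in Ioo (-π) π, Complex.exp (((a:ℂ) - b) * θ * Complex.I)
      = if a = b then (((2*π : ℝ)) : ℂ) else 0 := by
  by_cases hab : a = b
  · subst hab
    simp only [sub_self, zero_mul, Complex.exp_zero, if_true, eq_self_iff_true]
    rw [setIntegral_const, Real.volume_real_Ioo_of_le (by linarith [pi_pos] : -π ≤ π),
      Complex.real_smul, mul_one]
    push_cast
    ring
  · rw [if_neg hab]
    have hd : ((a:ℂ) - b) ≠ 0 := by
      intro h
      apply hab
      have : (a:ℂ) = b := by linear_combination h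
      exact_mod_cast this
    have hdi : ((a:ℂ) - b) * Complex.I ≠ 0 := mul_ne_zero hd Complex.I_ne_zero
    have e : ∀ θ : ℝ, Complex.exp (((a:ℂ) - b) * θ * Complex.I)
        = Complex.exp ((((a:ℂ) - b) * Complex.I) * θ) := by
      intro θ; congr 1; ring
    simp_rw [e]
    rw [← integral_Ioc_eq_integral_Ioo,
      ← intervalIntegral.integral_of_le (by linarith [pi_pos] : -π ≤ π),
      integral_exp_mul_complex hdi]
    set n : ℤ := (a:ℤ) - b with hndef
    have hn : ((n:ℂ)) = (a:ℂ) - b := by rw [hndef]; push_cast; ring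
    have h1 : ((((a:ℂ) - b) * Complex.I) * ((π:ℝ):ℂ))
        = ((((a:ℂ) - b) * Complex.I) * (((-π:ℝ)):ℂ)) + ((n:ℂ) * (2 * π * Complex.I)) := by
      rw [hn]
      push_cast
      ring
    rw [h1, Complex.exp_add, Complex.exp_int_mul_two_pi_mul_I, mul_one, sub_self, zero_div]

lemma r_int {c : ℝ} (hc : 0 < c) (a k : ℕ) (hak : a + 2 ≤ k) :
    ∫ r in Ioi (0:ℝ), r ^ (2*a+1) * ((c + r^2) ^ k)⁻¹
      = (1/2) * (a.factorial * (k - a - 2).factorial / (k - 1).factorial) * (c ^ (k - a - 1))⁻¹ := by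
  have sub := integral_comp_rpow_Ioi (fun t : ℝ => (1/2) * (t ^ a * ((c + t) ^ k)⁻¹))
    (p := 2) two_ne_zero
  have congr1 : ∀ x ∈ Ioi (0:ℝ),
      (|(2:ℝ)| * x ^ ((2:ℝ) - 1)) • ((1/2) * ((x ^ (2:ℝ)) ^ a * ((c + x ^ (2:ℝ)) ^ k)⁻¹))
        = x ^ (2*a+1) * ((c + x^2) ^ k)⁻¹ := by
    intro x hx
    have hx0 : (0:ℝ) < x := hx
    have h2 : x ^ (2:ℝ) = x ^ (2:ℕ) := by
      rw [← Real.rpow_natCast x 2]; norm_num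
    have h1 : x ^ ((2:ℝ)-1) = x := by
      norm_num
    rw [h2, h1, smul_eq_mul]
    have : ((x^(2:ℕ)):ℝ)^a = x^(2*a) := by rw [← pow_mul]
    rw [this]
    rw [abs_of_nonneg (by norm_num : (0:ℝ) ≤ 2)]
    ring
  rw [setIntegral_congr_fun measurableSet_Ioi congr1] at sub
  rw [sub, integral_const_mul, F_eval hc a k hak]
  ring

lemma one_var {c : ℝ} (hc : 0 < c) (a b k : ℕ) (hak : a + 2 ≤ k) (hbk : b + 2 ≤ k) :
    ∫ w : ℂ, w ^ a * (starRingEnd ℂ) w ^ b * ((((c + ‖w‖ ^ 2) ^ k)⁻¹ : ℝ) : ℂ)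
      = if a = b then
          ((π * (a.factorial * (k - a - 2).factorial / (k - 1).factorial)
            * (c ^ (k - a - 1))⁻¹ : ℝ) : ℂ)
        else 0 := by
  rw [← Complex.integral_comp_polarCoord_symm, polarCoord_target]
  have key : ∀ p ∈ (Ioi (0:ℝ) ×ˢ Ioo (-π) π),
      p.1 • ((Complex.polarCoord.symm p) ^ a
          * (starRingEnd ℂ) (Complex.polarCoord.symm p) ^ b
          * ((((c + ‖Complex.polarCoord.symm p‖ ^ 2) ^ k)⁻¹ : ℝ) : ℂ))
        = (((p.1 ^ (a+b+1) * ((c + p.1 ^ 2) ^ k)⁻¹ : ℝ)) : ℂ)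
            * Complex.exp (((a:ℂ) - b) * p.2 * Complex.I) := by
    rintro ⟨r, θ⟩ ⟨hr, hθ⟩
    have hr0 : (0:ℝ) < r := hr
    have h_w : Complex.polarCoord.symm (r, θ) = (r:ℂ) * Complex.exp (θ * Complex.I) := by
      rw [Complex.polarCoord_symm_apply, Complex.exp_mul_I]
      push_cast
      rfl
    have h_norm : ‖Complex.polarCoord.symm (r, θ)‖ ^ 2 = r ^ 2 := by
      rw [Complex.norm_polarCoord_symm]
      simp [sq_abs]
    have e1 : (starRingEnd ℂ) (Complex.exp ((θ:ℂ) * Complex.I))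
        = Complex.exp (-((θ:ℂ) * Complex.I)) := by
      rw [← Complex.exp_conj, map_mul, Complex.conj_ofReal, Complex.conj_I]
      ring_nf
    have e2 : Complex.exp ((θ:ℂ) * Complex.I) ^ a = Complex.exp ((a:ℂ) * ((θ:ℂ) * Complex.I)) := by
      rw [Complex.exp_nat_mul]
    have e3 : Complex.exp (-((θ:ℂ) * Complex.I)) ^ b
        = Complex.exp ((b:ℂ) * (-((θ:ℂ) * Complex.I))) := by
      rw [Complex.exp_nat_mul]
    have e4 : Complex.exp ((a:ℂ) * ((θ:ℂ) * Complex.I))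
          * Complex.exp ((b:ℂ) * (-((θ:ℂ) * Complex.I)))
        = Complex.exp (((a:ℂ) - b) * θ * Complex.I) := by
      rw [← Complex.exp_add]
      congr 1
      ring
    rw [h_norm, h_w, map_mul, Complex.conj_ofReal, mul_pow, mul_pow, e1, e2, e3]
    have : ((r:ℂ) ^ a * Complex.exp ((a:ℂ) * ((θ:ℂ) * Complex.I)))
          * ((r:ℂ) ^ b * Complex.exp ((b:ℂ) * (-((θ:ℂ) * Complex.I))))
          * ((((c + r ^ 2) ^ k)⁻¹ : ℝ) : ℂ)
        = ((r:ℂ) ^ (a+b) * ((((c + r ^ 2) ^ k)⁻¹ : ℝ) : ℂ))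
            * (Complex.exp ((a:ℂ) * ((θ:ℂ) * Complex.I))
                * Complex.exp ((b:ℂ) * (-((θ:ℂ) * Complex.I)))) := by
      rw [pow_add]; ring
    rw [this, e4, Complex.real_smul]
    push_cast
    ring
  rw [setIntegral_congr_fun (measurableSet_Ioi.prod measurableSet_Ioo) key,
    Measure.volume_eq_prod,
    setIntegral_prod_mul (fun r : ℝ => (((r ^ (a+b+1) * ((c + r ^ 2) ^ k)⁻¹ : ℝ)) : ℂ))
      (fun θ : ℝ => Complex.exp (((a:ℂ) - b) * θ * Complex.I)) (Ioi 0) (Ioo (-π) π),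
    theta_int a b]
  by_cases hab : a = b
  · subst hab
    rw [if_pos rfl, if_pos rfl]
    rw [show a + a + 1 = 2*a+1 by ring]  -- exponent form for r_int
    rw [show (∫ x in Ioi (0:ℝ), ((x ^ (2*a+1) * ((c + x ^ 2) ^ k)⁻¹ : ℝ) : ℂ))
        = (((∫ x in Ioi (0:ℝ), x ^ (2*a+1) * ((c + x ^ 2) ^ k)⁻¹ : ℝ)) : ℂ) from
      integral_ofReal, r_int hc a k hak]
    rw [← Complex.ofReal_mul]
    congr 1
    ring
  · rw [if_neg hab, if_neg hab, mul_zero]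

lemma cont_f (n : ℕ) (α β : Fin n → ℕ) (k : ℕ) :
    Continuous (fun z : Fin n → ℂ =>
      (∏ i, z i ^ α i) * (starRingEnd ℂ) (∏ i, z i ^ β i)
        * ((((1 + ∑ i, ‖z i‖ ^ 2) ^ k)⁻¹ : ℝ) : ℂ)) := by
  have hA : Continuous fun z : Fin n → ℂ => ∏ i, z i ^ α i :=
    continuous_finset_prod _ (fun i _ => (continuous_apply i).pow _)
  have hB : Continuous fun z : Fin n → ℂ => ∏ i, z i ^ β i :=
    continuous_finset_prod _ (fun i _ => (continuous_apply i).pow _)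
  have hS : Continuous fun z : Fin n → ℂ => (1 + ∑ i, ‖z i‖ ^ 2 : ℝ) := by fun_prop
  have hinv : Continuous fun z : Fin n → ℂ => (((1 + ∑ i, ‖z i‖ ^ 2) ^ k)⁻¹ : ℝ) := by
    refine ((hS.pow k).inv₀ ?_)
    intro z
    have : ∀ i, (0:ℝ) ≤ ‖z i‖ ^ 2 := fun i => sq_nonneg _
    have hpos : (0:ℝ) < 1 + ∑ i, ‖z i‖ ^ 2 := by positivity
    exact pow_ne_zero _ hpos.ne'
  exact (hA.mul (Complex.continuous_conj.comp hB)).mul (Complex.continuous_ofReal.comp hinv)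

lemma integrable_main (n : ℕ) (α β : Fin n → ℕ) (k : ℕ)
    (h : 2*n + (∑ i, α i) + (∑ i, β i) + 2 ≤ 2*k) :
    Integrable (fun z : Fin n → ℂ =>
      (∏ i, z i ^ α i) * (starRingEnd ℂ) (∏ i, z i ^ β i)
        * ((((1 + ∑ i, ‖z i‖ ^ 2) ^ k)⁻¹ : ℝ) : ℂ)) := by
  set s : ℕ := (∑ i, α i) + (∑ i, β i) with hs
  set r : ℝ := k - s/2 with hr
  have h2r : (Module.finrank ℝ (Fin n → ℂ) : ℝ) < 2*r := by
    rw [Module.finrank_pi_fintype, Complex.finrank_real_complex]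
    simp only [Finset.sum_const, Finset.card_univ, Fintype.card_fin, smul_eq_mul]
    have hsnat : 2*n + s + 2 ≤ 2*k := by omega
    have : (2*n + s + 2 : ℝ) ≤ 2*k := by exact_mod_cast hsnat
    push_cast
    rw [hr]
    linarith
  have hg : Integrable (fun z : Fin n → ℂ => (2:ℝ)^r * (1 + ‖z‖) ^ (-(2*r))) :=
    (integrable_one_add_norm h2r).const_mul _
  refine Integrable.mono' hg (cont_f n α β k).aestronglyMeasurable ?_
  filter_upwards [] with z
  set S : ℝ := ∑ i, ‖z i‖ ^ 2 with hS
  have hS0 : (0:ℝ) ≤ S := Finset.sum_nonneg (fun i _ => sq_nonneg _)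
  have h1S : (0:ℝ) < 1 + S := by linarith
  -- norm of f
  have hnorm : ‖(∏ i, z i ^ α i) * (starRingEnd ℂ) (∏ i, z i ^ β i)
        * ((((1 + S) ^ k)⁻¹ : ℝ) : ℂ)‖
      = (∏ i, ‖z i‖ ^ (α i + β i)) * ((1 + S) ^ k)⁻¹ := by
    rw [norm_mul, norm_mul, RCLike.norm_conj, norm_prod, norm_prod]
    simp only [norm_pow]
    rw [Complex.norm_real, Real.norm_eq_abs, abs_of_pos (by positivity)]
    rw [← Finset.prod_mul_distrib]
    congr 1
    · exact Finset.prod_congr rfl (fun i _ => (pow_add _ _ _).symm)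
  rw [hnorm]
  -- each |z i| ≤ sqrt (1+S)
  have hzi : ∀ i, ‖z i‖ ≤ Real.sqrt (1 + S) := by
    intro i
    rw [Real.le_sqrt (norm_nonneg _) h1S.le]
    have : ‖z i‖ ^ 2 ≤ S := Finset.single_le_sum (f := fun i => ‖z i‖ ^ 2)
      (fun i _ => sq_nonneg _) (Finset.mem_univ i)
    linarith
  have step1 : (∏ i, ‖z i‖ ^ (α i + β i)) ≤ (1 + S) ^ ((s:ℝ)/2) := by
    calc (∏ i, ‖z i‖ ^ (α i + β i)) ≤ ∏ i, Real.sqrt (1 + S) ^ (α i + β i) := by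
          refine Finset.prod_le_prod (fun i _ => by positivity)
            (fun i _ => pow_le_pow_left₀ (norm_nonneg _) (hzi i) _)
      _ = Real.sqrt (1 + S) ^ s := by
          rw [Finset.prod_pow_eq_pow_sum, hs, Finset.sum_add_distrib]
      _ = (1 + S) ^ ((s:ℝ)/2) := by
          rw [Real.sqrt_eq_rpow, ← Real.rpow_natCast ((1+S) ^ ((1:ℝ)/2)) s,
            ← Real.rpow_mul h1S.le]
          congr 1
          ring
  have step2 : ((1 + S) ^ k)⁻¹ = (1 + S) ^ (-(k:ℝ)) := by
    rw [← Real.rpow_natCast (1+S) k, ← Real.rpow_neg h1S.le]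
  have hr0 : (0:ℝ) ≤ r := by
    have : (0:ℝ) ≤ (Module.finrank ℝ (Fin n → ℂ) : ℝ) := Nat.cast_nonneg _
    linarith
  have hzS : ‖z‖ ^ 2 ≤ S := by
    have hn : ‖z‖ ≤ Real.sqrt S := by
      rw [pi_norm_le_iff_of_nonneg (Real.sqrt_nonneg S)]
      intro i
      rw [Real.le_sqrt (norm_nonneg _) hS0]
      exact Finset.single_le_sum (f := fun i => ‖z i‖ ^ 2)
        (fun i _ => sq_nonneg _) (Finset.mem_univ i)
    calc ‖z‖ ^ 2 ≤ Real.sqrt S ^ 2 := by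
          exact pow_le_pow_left₀ (norm_nonneg _) hn 2
      _ = S := Real.sq_sqrt hS0
  have hq : (1 + ‖z‖) ^ 2 ≤ 2 * (1 + S) := by nlinarith [norm_nonneg z, sq_nonneg (‖z‖ - 1), hzS]
  have hz1 : (0:ℝ) < 1 + ‖z‖ := by have := norm_nonneg z; linarith
  have final : (1 + S) ^ (-r) ≤ (2:ℝ)^r * (1 + ‖z‖) ^ (-(2*r)) := by
    have hle : ((2:ℝ) * (1 + S)) ^ (-r) ≤ ((1 + ‖z‖) ^ (2:ℕ) : ℝ) ^ (-r) :=
      Real.rpow_le_rpow_of_nonpos (by positivity) hq (by linarith)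
    have e1 : ((2:ℝ) * (1 + S)) ^ (-r) = (2:ℝ) ^ (-r) * (1 + S) ^ (-r) :=
      Real.mul_rpow (by norm_num) h1S.le
    have e2 : ((1 + ‖z‖) ^ (2:ℕ) : ℝ) ^ (-r) = (1 + ‖z‖) ^ (-(2*r)) := by
      rw [← Real.rpow_natCast (1+‖z‖) 2, ← Real.rpow_mul hz1.le]
      congr 1
      push_cast
      ring
    rw [e1, e2] at hle
    have := mul_le_mul_of_nonneg_left hle (le_of_lt (Real.rpow_pos_of_pos two_pos r))
    calc (1 + S) ^ (-r) = (2:ℝ)^r * ((2:ℝ)^(-r) * (1 + S) ^ (-r)) := by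
          rw [← mul_assoc, ← Real.rpow_add two_pos, add_neg_cancel, Real.rpow_zero, one_mul]
      _ ≤ (2:ℝ)^r * (1 + ‖z‖) ^ (-(2*r)) := this
  calc (∏ i, ‖z i‖ ^ (α i + β i)) * ((1 + S) ^ k)⁻¹
      ≤ (1 + S) ^ ((s:ℝ)/2) * (1 + S) ^ (-(k:ℝ)) := by
        rw [step2]
        exact mul_le_mul_of_nonneg_right step1 (Real.rpow_nonneg h1S.le _)
    _ = (1 + S) ^ (-r) := by
        rw [← Real.rpow_add h1S]
        congr 1
        rw [hr]
        ring
    _ ≤ (2:ℝ)^r * (1 + ‖z‖) ^ (-(2*r)) := final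

lemma key : ∀ (n : ℕ) (α β : Fin n → ℕ) (k : ℕ),
    n + (∑ i, α i) + 1 ≤ k → n + (∑ i, β i) + 1 ≤ k →
    ∫ z : Fin n → ℂ,
        (∏ i, z i ^ α i) * (starRingEnd ℂ) (∏ i, z i ^ β i)
          * ((((1 + ∑ i, ‖z i‖ ^ 2) ^ k)⁻¹ : ℝ) : ℂ)
      = if α = β then
          ((π ^ n * ((∏ i, (α i).factorial) * (k - n - 1 - ∑ i, α i).factorial
            / (k - 1).factorial) : ℝ) : ℂ)
        else 0 := by
  intro n
  induction n with
  | zero =>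
    intro α β k hα hβ
    have hαβ : α = β := Subsingleton.elim α β
    rw [if_pos hαβ]
    have hint : ∀ z : Fin 0 → ℂ,
        (∏ i, z i ^ α i) * (starRingEnd ℂ) (∏ i, z i ^ β i)
          * ((((1 + ∑ i, ‖z i‖ ^ 2) ^ 2) ⁻¹ : ℝ) : ℂ) = 1 := fun z => by simp
    simp only [Finset.univ_eq_empty, Finset.prod_empty, Finset.sum_empty, map_one, one_mul,
      add_zero, one_pow, inv_one, Complex.ofReal_one]
    rw [integral_const]
    have hvol : (volume : Measure (Fin 0 → ℂ)) Set.univ = 1 := by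
      rw [volume_pi, Measure.pi_univ]
      simp
    rw [measureReal_def, hvol]
    simp only [ENNReal.toReal_one, one_smul, pow_zero, one_mul]
    have : (k - 0 - 1 - 0) = k - 1 := by omega
    rw [this]
    have hf : ((k-1).factorial : ℝ) ≠ 0 := Nat.cast_ne_zero.2 (Nat.factorial_ne_zero _)
    rw [show ((1:ℕ):ℝ) = 1 by norm_num, one_mul, div_self hf, Complex.ofReal_one]
  | succ n IH =>
    intro α β k hα hβ
    have ha_le : α 0 ≤ ∑ i, α i := Finset.single_le_sum (fun i _ => Nat.zero_le _)
      (Finset.mem_univ 0)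
    have hb_le : β 0 ≤ ∑ i, β i := Finset.single_le_sum (fun i _ => Nat.zero_le _)
      (Finset.mem_univ 0)
    have hsumα : ∑ i, α i = α 0 + ∑ i : Fin n, α i.succ := by
      rw [Fin.sum_univ_succ]
    have hsumβ : ∑ i, β i = β 0 + ∑ i : Fin n, β i.succ := by
      rw [Fin.sum_univ_succ]
    -- integrability
    have hint : Integrable (fun z : Fin (n+1) → ℂ =>
        (∏ i, z i ^ α i) * (starRingEnd ℂ) (∏ i, z i ^ β i)
          * ((((1 + ∑ i, ‖z i‖ ^ 2) ^ k)⁻¹ : ℝ) : ℂ)) := by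
      exact integrable_main (n+1) α β k (by omega)
    have hmp := (measurePreserving_piFinSuccAbove (fun _ : Fin (n+1) => (volume : Measure ℂ)) 0).symm
    rw [volume_pi, ← hmp.integral_comp (MeasurableEquiv.measurableEmbedding _)]
    have hintc : Integrable ((fun z : Fin (n+1) → ℂ =>
          (∏ i, z i ^ α i) * (starRingEnd ℂ) (∏ i, z i ^ β i)
            * ((((1 + ∑ i, ‖z i‖ ^ 2) ^ k)⁻¹ : ℝ) : ℂ))
          ∘ ⇑(MeasurableEquiv.piFinSuccAbove (fun _ : Fin (n+1) => ℂ) 0).symm)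
        ((volume : Measure ℂ).prod (Measure.pi fun _ : Fin n => (volume : Measure ℂ))) := by
      rw [hmp.integrable_comp_emb (MeasurableEquiv.measurableEmbedding _)]
      rw [← volume_pi]
      exact hint
    refine Eq.trans (integral_prod_symm _ hintc) ?_
    simp only [Function.comp_def, MeasurableEquiv.piFinSuccAbove_symm_apply, Fin.insertNthEquiv,
      Equiv.coe_fn_mk, Fin.insertNth_zero, Fin.cons_zero, Fin.cons_succ, Fin.prod_univ_succ,
      Fin.sum_univ_succ, Fin.zero_succAbove, cast_eq]
    have hak : α 0 + 2 ≤ k := by omega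
    have hbk : β 0 + 2 ≤ k := by omega
    have inner_eq : ∀ y : Fin n → ℂ,
        (∫ x : ℂ, (x ^ α 0 * ∏ i : Fin n, y i ^ α i.succ)
            * (starRingEnd ℂ) (x ^ β 0 * ∏ i : Fin n, y i ^ β i.succ)
            * ((((1 + (‖x‖^2 + ∑ i : Fin n, ‖y i‖^2))^k)⁻¹ : ℝ) : ℂ))
          = ((∏ i : Fin n, y i ^ α i.succ) * (starRingEnd ℂ) (∏ i : Fin n, y i ^ β i.succ))
              * (if α 0 = β 0 then
                  ((π * ((α 0).factorial * (k - α 0 - 2).factorial / (k-1).factorial) : ℝ) : ℂ)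
                    * ((((1 + ∑ i : Fin n, ‖y i‖^2) ^ (k - α 0 - 1))⁻¹ : ℝ) : ℂ)
                else 0) := by
      intro y
      have hc : (0:ℝ) < 1 + ∑ i : Fin n, ‖y i‖^2 := by positivity
      have hpt : ∀ x : ℂ, (x ^ α 0 * ∏ i : Fin n, y i ^ α i.succ)
            * (starRingEnd ℂ) (x ^ β 0 * ∏ i : Fin n, y i ^ β i.succ)
            * ((((1 + (‖x‖^2 + ∑ i : Fin n, ‖y i‖^2))^k)⁻¹ : ℝ) : ℂ)
          = ((∏ i : Fin n, y i ^ α i.succ) * (starRingEnd ℂ) (∏ i : Fin n, y i ^ β i.succ))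
              * (x ^ α 0 * (starRingEnd ℂ) x ^ β 0
                  * (((((1 + ∑ i : Fin n, ‖y i‖^2) + ‖x‖^2)^k)⁻¹ : ℝ) : ℂ)) := by
        intro x
        have hre : (1 + (‖x‖^2 + ∑ i : Fin n, ‖y i‖^2))
            = ((1 + ∑ i : Fin n, ‖y i‖^2) + ‖x‖^2) := by ring
        rw [hre, map_mul, map_pow]
        ring
      simp_rw [hpt]
      rw [integral_const_mul, one_var hc (α 0) (β 0) k hak hbk]
      by_cases hab : α 0 = β 0
      · rw [if_pos hab, if_pos hab, Complex.ofReal_mul]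
      · rw [if_neg hab, if_neg hab]
    simp_rw [inner_eq]
    by_cases hab : α 0 = β 0
    · simp only [if_pos hab]
      have hpt2 : ∀ y : Fin n → ℂ,
          ((∏ i : Fin n, y i ^ α i.succ) * (starRingEnd ℂ) (∏ i : Fin n, y i ^ β i.succ))
              * (((π * ((α 0).factorial * (k - α 0 - 2).factorial / (k-1).factorial) : ℝ) : ℂ)
                  * ((((1 + ∑ i : Fin n, ‖y i‖^2) ^ (k - α 0 - 1))⁻¹ : ℝ) : ℂ))
            = ((π * ((α 0).factorial * (k - α 0 - 2).factorial / (k-1).factorial) : ℝ) : ℂ)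
                * ((∏ i : Fin n, y i ^ α i.succ)
                    * (starRingEnd ℂ) (∏ i : Fin n, y i ^ β i.succ)
                    * ((((1 + ∑ i : Fin n, ‖y i‖^2) ^ (k - α 0 - 1))⁻¹ : ℝ) : ℂ)) := by
        intro y
        ring
      simp_rw [hpt2]
      have hIH1 : n + (∑ i : Fin n, α i.succ) + 1 ≤ k - α 0 - 1 := by omega
      have hIH2 : n + (∑ i : Fin n, β i.succ) + 1 ≤ k - α 0 - 1 := by omega
      rw [integral_const_mul, ← volume_pi,
        IH (fun i => α i.succ) (fun i => β i.succ) (k - α 0 - 1) (by simpa using hIH1)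
          (by simpa using hIH2)]
      have hiff : (α = β) ↔ ((fun i : Fin n => α i.succ) = fun i : Fin n => β i.succ) := by
        constructor
        · intro h; rw [h]
        · intro h
          funext i
          refine Fin.cases hab (fun j => congrFun h j) i
      by_cases htail : (fun i : Fin n => α i.succ) = fun i : Fin n => β i.succ
      · rw [if_pos htail, if_pos (hiff.mpr htail)]
        rw [← Complex.ofReal_mul]
        congr 1
        have e1 : k - α 0 - 1 - 1 = k - α 0 - 2 := by omega
        have e2 : k - α 0 - 1 - n - 1 - (∑ i : Fin n, α i.succ)
            = k - (n+1) - 1 - (∑ i : Fin (n+1), α i) := by omega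
        have e3 : k - (n+1) - 1 - (α 0 + ∑ i : Fin n, α i.succ)
            = k - (n+1) - 1 - ∑ i : Fin (n+1), α i := by omega
        rw [e1, e2, e3]
        have hne1 : ((k - α 0 - 2).factorial : ℝ) ≠ 0 := Nat.cast_ne_zero.2 (Nat.factorial_ne_zero _)
        have hne2 : ((k - 1).factorial : ℝ) ≠ 0 := Nat.cast_ne_zero.2 (Nat.factorial_ne_zero _)
        push_cast
        field_simp
        ring
      · rw [if_neg htail, if_neg (fun h => htail (hiff.mp h)), mul_zero]
    · simp only [if_neg hab, mul_zero, integral_zero]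
      rw [if_neg (fun h : α = β => hab (congrFun h 0))]

/-- For multi-indices `α, β` with `|α|, |β| ≤ m`,
`((n+m)!/(π^n m!)) ∫_{ℂⁿ} z^α z̄^β (1+|z|²)^{-(n+m+1)} dV = δ_{αβ} α!(m-|α|)!/m!`. -/
theorem monomial_inner_product (n m : ℕ) (hn : 0 < n)
    (α β : Fin n → ℕ) (hα : ∑ i, α i ≤ m) (hβ : ∑ i, β i ≤ m) :
    ((Nat.factorial (n + m) : ℂ) / ((π : ℂ) ^ n * (Nat.factorial m : ℂ))) *
      ∫ z : Fin n → ℂ,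
        (∏ i, z i ^ α i) * (starRingEnd ℂ) (∏ i, z i ^ β i) *
        (((((1 + ∑ i, ‖z i‖ ^ 2) ^ (n + m + 1))⁻¹ : ℝ)) : ℂ) =
      if α = β then
        ((∏ i, (Nat.factorial (α i) : ℂ)) * (Nat.factorial (m - ∑ i, α i) : ℂ)) /
          (Nat.factorial m : ℂ)
      else 0 := by
  have h1 : n + (∑ i, α i) + 1 ≤ n + m + 1 := by omega
  have h2 : n + (∑ i, β i) + 1 ≤ n + m + 1 := by omega
  rw [key n α β (n+m+1) h1 h2]
  by_cases hab : α = β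
  · rw [if_pos hab, if_pos hab]
    have e : (n+m+1) - n - 1 - ∑ i, α i = m - ∑ i, α i := by omega
    have e2 : (n+m+1) - 1 = n + m := by omega
    rw [e, e2]
    have hπ : ((π:ℝ):ℂ) ≠ 0 := Complex.ofReal_ne_zero.mpr Real.pi_ne_zero
    have hπn : ((π:ℝ):ℂ)^n ≠ 0 := pow_ne_zero _ hπ
    have hm : ((m.factorial : ℂ)) ≠ 0 := Nat.cast_ne_zero.2 (Nat.factorial_ne_zero _)
    have hnm : (((n+m).factorial : ℂ)) ≠ 0 := Nat.cast_ne_zero.2 (Nat.factorial_ne_zero _)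
    push_cast
    field_simp
  · rw [if_neg hab, if_neg hab, mul_zero]
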